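/- arXiv:1301.2418 — 2 statements merged into one kernel-verified Lean document; each statement's English description precedes it below -/
import Mathlib

section
/- Let $k$ be an algebraically closed field, let $f_1,\ldots,f_p$ be binomials in $k[U_1,\ldots,U_n]$ generating an ideal $I$, and let $u_1(t,z),\ldots,u_n(t,z) \in k[[t,z]]$ be units (i.e., $u_j(0,0) \neq 0$). Suppose $\sqrt{I} = I_1 \cap \cdots \cap I_q$ with each $I_l$ prime, and $\sqrt{I}^e \subseteq I$. If $f_l(u_1,\ldots,u_n) \in (t,z)^{qei}$ for all $1 \le l \le p$, then there exists an index $m$ such that $g(u_1,\ldots,u_n) \in (t,z)^{i}$ for all $g \in I_m$. -/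
/-!
Membership in `(t,z)^i` says that the total order is at least `i`, and on the domain `k[[t,z]]`
the total order is additive. If every component `P m` contained some `g m` whose image has order
`< i`, then `G = ∏ m, g m` would lie in `√I`, so `G ^ e ∈ I` and the image of `G ^ e` would have
order at least `q e i`; additivity computes that order as `e • ∑ m, ord (g m) < q e i`.
-/

/-- `F ∈ (t,z)^i` in `k[[t,z]] = (k[[t]])[[z]]`: all coefficients of
total degree `< i` vanish.  Here `b` is the exponent of `z` and `a` that of `t`. -/
def Mem2 {k : Type*} [Field k] (i : ℕ) (F : PowerSeries (PowerSeries k)) : Prop :=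
  ∀ a b : ℕ, a + b < i → PowerSeries.coeff (R := k) a (PowerSeries.coeff (R := PowerSeries k) b F) = 0

namespace MvPowerSeries

variable {σ R : Type*} [CommSemiring R]

variable (σ R) in
def leOrderIdeal (n : ℕ∞) : Ideal (MvPowerSeries σ R) where
  carrier := {f | n ≤ f.order}
  zero_mem' := by simp
  add_mem' hf hg := le_trans (le_min hf hg) min_order_le_add
  smul_mem' _ _ hg := le_trans (le_add_left hg) le_order_mul

theorem order_pow [NoZeroDivisors R] [Nontrivial R] (f : MvPowerSeries σ R) (n : ℕ) :
    (f ^ n).order = n • f.order := by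
  simpa using order_prod (fun _ : Fin n => f) Finset.univ

theorem coeff_optionEquivLeft_symm (F : PowerSeries (MvPowerSeries σ R)) (d : Option σ →₀ ℕ) :
    coeff d ((optionEquivLeft σ R).symm F) = coeff d.some (PowerSeries.coeff (d none) F) := by
  rw [← AlgEquiv.apply_symm_apply (optionEquivLeft σ R) F, coeff_coeff_optionEquivLeft,
    AlgEquiv.symm_apply_apply, Finsupp.optionElim_some]

end MvPowerSeries

theorem Finsupp.degree_option_unit (d : Option Unit →₀ ℕ) :
    d.degree = d none + d (Option.some ()) := by
  rw [Finsupp.degree_eq_sum, Fintype.sum_option, Fintype.sum_unique]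

-- The variable `none` plays the role of `z`, and `some ()` that of `t`.
open MvPowerSeries in
theorem mem2_iff_le_order {k : Type*} [Field k] {i : ℕ} (F : PowerSeries (PowerSeries k)) :
    Mem2 i F ↔ (i : ℕ∞) ≤ ((optionEquivLeft Unit k).symm F).order := by
  constructor
  · intro hF
    refine nat_le_order fun d hd => ?_
    rw [Finsupp.degree_option_unit] at hd
    rw [coeff_optionEquivLeft_symm, ← PowerSeries.coeff_def rfl]
    exact hF _ _ (by rw [Finsupp.some_apply]; omega)
  · intro hF a b hab
    have hdeg : ((Finsupp.single () a).optionElim b).degree = b + a := by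
      rw [Finsupp.degree_option_unit, Finsupp.optionElim_apply_none,
        Finsupp.optionElim_apply_some, Finsupp.single_eq_same]
    have hzero := coeff_of_lt_order (f := (optionEquivLeft Unit k).symm F)
      (lt_of_lt_of_le (by rw [hdeg]; exact_mod_cast (by omega : b + a < i)) hF)
    rwa [coeff_optionEquivLeft_symm, Finsupp.some_optionElim, Finsupp.optionElim_apply_none,
      PowerSeries.coeff_coeToMvPowerSeries] at hzero

theorem ENat.nsmul_sum_lt_of_forall_lt {q e i : ℕ} (hq : 0 < q) (he : 0 < e) (x : Fin q → ℕ∞)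
    (hx : ∀ m, x m < i) : e • ∑ m, x m < ((q * e * i : ℕ) : ℕ∞) := by
  lift x to Fin q → ℕ using fun m => (hx m).ne_top
  have hsum : ∑ m, x m < q * i := by
    simpa using Finset.sum_lt_sum_of_nonempty (Finset.univ_nonempty_iff.2 ⟨⟨0, hq⟩⟩)
      fun m _ => Nat.cast_lt.1 (hx m)
  have : e * ∑ m, x m < e * (q * i) := Nat.mul_lt_mul_of_pos_left hsum he
  simp only [nsmul_eq_mul]
  exact_mod_cast (show e * ∑ m, x m < q * e * i by linarith)

theorem exists_forall_le_order_of_radical_pow_le {A σ R : Type*} [CommRing A] [CommSemiring R]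
    [NoZeroDivisors R] [Nontrivial R] (φ : A →+* MvPowerSeries σ R) {q : ℕ} (hq : 0 < q)
    (P : Fin q → Ideal A) (I : Ideal A) (hrad : ⨅ m, P m ≤ I.radical) {e : ℕ} (he : 0 < e)
    (hpow : I.radical ^ e ≤ I) {i : ℕ}
    (hI : I ≤ (MvPowerSeries.leOrderIdeal σ R (q * e * i : ℕ)).comap φ) :
    ∃ m, ∀ g ∈ P m, (i : ℕ∞) ≤ (φ g).order := by
  by_contra! hcon
  choose g hgP hlt using hcon
  have hprod : ∏ m, g m ∈ I.radical :=
    hrad (Ideal.mem_iInf.2 fun m => Ideal.prod_mem _ (Finset.mem_univ m) (hgP m))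
  have hord : ((q * e * i : ℕ) : ℕ∞) ≤ (φ ((∏ m, g m) ^ e)).order :=
    hI (hpow (Ideal.pow_mem_pow hprod e))
  rw [map_pow, MvPowerSeries.order_pow, map_prod, MvPowerSeries.order_prod] at hord
  exact (ENat.nsmul_sum_lt_of_forall_lt hq he _ hlt).not_ge hord

theorem binomial_units_land_in_some_component_general
    {k : Type*} [Field k] {n p q : ℕ} (hq : 0 < q)
    (f : Fin p → MvPolynomial (Fin n) k)
    (I : Ideal (MvPolynomial (Fin n) k)) (hI : I = Ideal.span (Set.range f))
    (P : Fin q → Ideal (MvPolynomial (Fin n) k)) (hP : ∀ l, (P l).IsPrime)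
    (hrad : I.radical = ⨅ l, P l)
    (e : ℕ) (hpow : I.radical ^ e ≤ I)
    (u : Fin n → PowerSeries (PowerSeries k))
    (i : ℕ)
    (h : ∀ l, Mem2 (q * e * i) (MvPolynomial.aeval u (f l))) :
    ∃ m : Fin q, ∀ g ∈ P m, Mem2 i (MvPolynomial.aeval u g) := by
  have he : 0 < e := Nat.pos_of_ne_zero fun he => (hP ⟨0, hq⟩).ne_top <| eq_top_iff.2 <|
    calc ⊤ ≤ I := by simpa [he] using hpow
      _ ≤ ⨅ l, P l := hrad ▸ Ideal.le_radical
      _ ≤ P ⟨0, hq⟩ := iInf_le _ _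
  let φ : MvPolynomial (Fin n) k →+* MvPowerSeries (Option Unit) k :=
    (MvPowerSeries.optionEquivLeft Unit k).symm.toRingHom.comp (MvPolynomial.aeval u).toRingHom
  have hIφ : I ≤ (MvPowerSeries.leOrderIdeal (Option Unit) k (q * e * i : ℕ)).comap φ :=
    hI ▸ Ideal.span_le.2 (Set.range_subset_iff.2 fun l => (mem2_iff_le_order _).1 (h l))
  obtain ⟨m, hm⟩ := exists_forall_le_order_of_radical_pow_le φ hq P I hrad.ge he hpow hIφ
  exact ⟨m, fun g hg => (mem2_iff_le_order _).2 (hm g hg)⟩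

theorem binomial_units_land_in_some_component
    {k : Type*} [Field k] [IsAlgClosed k] {n p q : ℕ} (hq : 0 < q)
    (f : Fin p → MvPolynomial (Fin n) k)
    (hbin : ∀ l, ∃ (a b : k) (α β : Fin n →₀ ℕ),
      f l = MvPolynomial.monomial α a + MvPolynomial.monomial β b)
    (I : Ideal (MvPolynomial (Fin n) k)) (hI : I = Ideal.span (Set.range f))
    (P : Fin q → Ideal (MvPolynomial (Fin n) k)) (hP : ∀ l, (P l).IsPrime)
    (hrad : I.radical = ⨅ l, P l)
    (e : ℕ) (hpow : I.radical ^ e ≤ I)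
    (u : Fin n → PowerSeries (PowerSeries k))
    (hu : ∀ j, PowerSeries.constantCoeff (R := k)
        (PowerSeries.constantCoeff (R := PowerSeries k) (u j)) ≠ 0)
    (i : ℕ)
    (h : ∀ l, Mem2 (q * e * i) (MvPolynomial.aeval u (f l))) :
    ∃ m : Fin q, ∀ g ∈ P m, Mem2 i (MvPolynomial.aeval u g) :=
  binomial_units_land_in_some_component_general hq f I hI P hP hrad e hpow u i h
end

section
/- Let $k$ be a field and let $x(t,z), y(t,z) \in k[[t,z]]$ with $x = u\cdot(x_0(t) + x_1(t)z + x_2(t)z^2 + z^3)$ and $y = v\cdot(y_0(t) + y_1(t)z + z^2)$ in Weierstrass form ($u, v$ units, $x_j, y_j \in (t)k[[t]]$). If $x^2 - y^3 \in (t,z)^i$ with $i > 6$, then $u^2 - v^3 \in (t,z)^{i-6}$ and the coefficient of $z^5$ in $(x_0 + x_1 z + x_2 z^2 + z^3)^2 - (y_0 + y_1 z + z^2)^3$, namely $2x_2 - 3y_1$, lies in $(t)^{i-6}$. -/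
/-!
Write `x = u P` and `y = v Q` with `P`, `Q` monic in `z` of degrees `3` and `2`. At `z = 0`,
`x² - y³ ∈ (t)^7` forces the `t`-orders `2 ord x₀` and `3 ord y₀` to agree below `7`, whence
`t² ∣ y₀`; so `Q ∈ (t,z)²` and `Q³` is a Weierstrass polynomial of degree `6` lying in `(t,z)⁶`.
Now `u⁻²(x² - y³) = (1 - u⁻²v³) Q³ + (P² - Q³)` is a Weierstrass division by `Q³`, since
`P² - Q³` has `z`-degree `< 6`. Dividing by a Weierstrass polynomial of degree `d` in `(t,z)^d`
costs exactly `d` in `(t,z)`-adic order, so `u² - v³ ∈ (t,z)^(i-6)` and `P² - Q³ ∈ (t,z)^i`;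
the `z⁵`-coefficient of the latter is `2 x₂ - 3 y₁`.
-/

open PowerSeries
open scoped Polynomial

namespace Polynomial

variable {R : Type*} [CommRing R]

theorem isMonicOfDegree_add_add_add_three [Nontrivial R] (a b c : R) :
    IsMonicOfDegree (X ^ 3 + C a * X ^ 2 + C b * X + C c) 3 :=
  (isMonicOfDegree_iff _ _).mpr ⟨by compute_degree, by simp⟩

theorem coeff_five_sq_sub_cube (a b c d f : R) :
    ((X ^ 3 + C a * X ^ 2 + C b * X + C c) ^ 2 - (X ^ 2 + C d * X + C f) ^ 3).coeff 5
      = 2 * a - 3 * d := by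
  simp [pow_succ, coeff_mul, coeff_X, Finset.Nat.antidiagonal_succ]
  ring

end Polynomial

namespace PowerSeries

variable {R : Type*} [CommRing R]

theorem X_pow_dvd_iff_le_order {n : ℕ} {φ : R⟦X⟧} :
    X ^ n ∣ φ ↔ (n : ℕ∞) ≤ φ.order := by
  rw [X_pow_dvd_iff]
  exact ⟨nat_le_order φ n, fun h m hm => coeff_of_lt_order m ((Nat.cast_lt.mpr hm).trans_le h)⟩

theorem min_order_le_order_of_X_pow_dvd_sub {n : ℕ} {φ ψ : R⟦X⟧} (h : X ^ n ∣ φ - ψ) :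
    min φ.order n ≤ ψ.order := by
  have := min_order_le_order_add φ (-(φ - ψ))
  rw [order_neg, neg_sub, add_sub_cancel] at this
  exact (min_le_min_left _ (X_pow_dvd_iff_le_order.mp h)).trans this

theorem min_order_eq_of_X_pow_dvd_sub {n : ℕ} {φ ψ : R⟦X⟧} (h : X ^ n ∣ φ - ψ) :
    min φ.order n = min ψ.order n :=
  le_antisymm (le_min (min_order_le_order_of_X_pow_dvd_sub h) (min_le_right _ _))
    (le_min (min_order_le_order_of_X_pow_dvd_sub (dvd_sub_comm.mp h)) (min_le_right _ _))

/-- `min (2 ord a) 7 = min (3 ord b) 7`, and `ord b = 1` would force `2 ord a = 3`. -/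
theorem X_sq_dvd_of_X_pow_seven_dvd_sq_sub_cube [IsDomain R] {a b c e : R⟦X⟧} (hc : IsUnit c)
    (he : IsUnit e) (hb : X ∣ b) (h : X ^ 7 ∣ c * a ^ 2 - e * b ^ 3) : X ^ 2 ∣ b := by
  have hmin := min_order_eq_of_X_pow_dvd_sub h
  simp only [order_mul, order_pow, order_zero_of_unit hc, order_zero_of_unit he, zero_add,
    nsmul_eq_mul] at hmin
  rw [← pow_one X, X_pow_dvd_iff_le_order] at hb
  rw [X_pow_dvd_iff_le_order]
  generalize a.order = α at hmin
  generalize b.order = β at hmin hb ⊢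
  induction β using ENat.recTopCoe with
  | top => exact le_top
  | coe β =>
    have hβ : 1 ≤ β := by exact_mod_cast hb
    suffices 2 ≤ β by exact_mod_cast this
    induction α using ENat.recTopCoe with
    | top =>
      have : 7 ≤ 3 * β := by exact_mod_cast (by simpa using hmin : (7 : ℕ∞) ≤ 3 * β)
      omega
    | coe α =>
      have : min (2 * α) 7 = min (3 * β) 7 := by
        simpa only [← Nat.cast_ofNat (R := ℕ∞), ← Nat.cast_mul, ← Nat.mono_cast.map_min,
          Nat.cast_inj] using hmin
      omega

end PowerSeries

section

variable {k : Type*} [Field k]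

theorem mem2_iff_X_pow_dvd_coeff {i : ℕ} {F : k⟦X⟧⟦X⟧} :
    Mem2 i F ↔ ∀ b, (X : k⟦X⟧) ^ (i - b) ∣ coeff b F := by
  simp only [X_pow_dvd_iff]
  exact ⟨fun h b a hab => h a b (by omega), fun h a b hab => h b a (by omega)⟩

theorem mem2_C_mul_X_pow {m : ℕ} {c : k⟦X⟧} (hc : X ^ m ∣ c) (n : ℕ) :
    Mem2 (m + n) (C c * X ^ n) := by
  rw [mem2_iff_X_pow_dvd_coeff]
  intro b
  rw [coeff_C_mul_X_pow]
  split_ifs with hb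
  · exact (pow_dvd_pow X (by omega)).trans hc
  · exact dvd_zero _

namespace Mem2

variable {i j : ℕ} {F G : k⟦X⟧⟦X⟧}

theorem add (hF : Mem2 i F) (hG : Mem2 i G) : Mem2 i (F + G) := fun a b hab => by
  rw [map_add, map_add, hF a b hab, hG a b hab, add_zero]

theorem sub (hF : Mem2 i F) (hG : Mem2 i G) : Mem2 i (F - G) := fun a b hab => by
  rw [map_sub, map_sub, hF a b hab, hG a b hab, sub_zero]

theorem mul (hF : Mem2 i F) (hG : Mem2 j G) : Mem2 (i + j) (F * G) := by
  intro a b hab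
  rw [coeff_mul, map_sum]
  refine Finset.sum_eq_zero fun p hp => ?_
  rw [coeff_mul]
  refine Finset.sum_eq_zero fun w hw => ?_
  rw [Finset.HasAntidiagonal.mem_antidiagonal] at hp hw
  rcases (by omega : w.1 + p.1 < i ∨ w.2 + p.2 < j) with hc | hc
  · rw [hF w.1 p.1 hc, zero_mul]
  · rw [hG w.2 p.2 hc, mul_zero]

theorem mul_left (G : k⟦X⟧⟦X⟧) (hF : Mem2 i F) : Mem2 i (G * F) := by
  simpa using (show Mem2 0 G from fun _ _ h => absurd h (Nat.not_lt_zero _)).mul hF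

theorem pow (hF : Mem2 i F) (n : ℕ) : Mem2 (i * n) (F ^ n) := by
  induction n with
  | zero => exact fun _ _ h => absurd h (by simp)
  | succ n ih => simpa [pow_succ, mul_add] using ih.mul hF

variable {d N : ℕ} {A r : k⟦X⟧[X]} {q : k⟦X⟧⟦X⟧}

/-- Induction on the `t`-exponent: the `z^(b+d)`-coefficient of `q * A` is `q_b` plus terms
`q_{b+d-p} A_p` with `p < d`, where `t^(d-p) ∣ A_p` only involves lower `t`-coefficients of `q`. -/
theorem quotient_of_mul_add (hA : A.IsMonicOfDegree d) (hAd : Mem2 d (A : k⟦X⟧⟦X⟧))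
    (hr : r.natDegree < d) (h : Mem2 N (q * A + r : k⟦X⟧⟦X⟧)) : Mem2 (N - d) q := by
  intro a
  induction a using Nat.strong_induction_on with
  | _ a ih =>
  intro b hab
  have hcoeff :
      coeff (b + d) (q * A : k⟦X⟧⟦X⟧) = coeff (b + d) (q * A + r : k⟦X⟧⟦X⟧) := by
    rw [map_add, Polynomial.coeff_coe, Polynomial.coeff_eq_zero_of_natDegree_lt (by omega),
      add_zero]
  have hvanish := h a (b + d) (by omega)
  rw [← hcoeff, coeff_mul, map_sum, Finset.sum_eq_single (b, d)] at hvanish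
  · rwa [Polynomial.coeff_coe, ← hA.natDegree_eq, hA.monic.coeff_natDegree, mul_one] at hvanish
  · rintro ⟨p₁, p₂⟩ hp hne
    rw [Finset.HasAntidiagonal.mem_antidiagonal] at hp
    rw [Polynomial.coeff_coe]
    rcases lt_trichotomy p₂ d with hlt | heq | hgt
    · have hq : (X : k⟦X⟧) ^ (a + 1 - (d - p₂)) ∣ coeff p₁ q :=
        X_pow_dvd_iff.mpr fun a' ha' => ih a' (by omega) p₁ (by omega)
      have hA' : X ^ (d - p₂) ∣ A.coeff p₂ := by
        simpa using mem2_iff_X_pow_dvd_coeff.mp hAd p₂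
      have hprod := mul_dvd_mul hq hA'
      rw [← pow_add] at hprod
      exact X_pow_dvd_iff.mp ((pow_dvd_pow X (by omega : a + 1 ≤ _)).trans hprod) a a.lt_succ_self
    · exact absurd (Prod.ext (by simp only; omega) heq) hne
    · rw [Polynomial.coeff_eq_zero_of_natDegree_lt (hA.natDegree_eq ▸ hgt), mul_zero, map_zero]
  · exact fun hmem => absurd (Finset.HasAntidiagonal.mem_antidiagonal.mpr (by rfl)) hmem

theorem weierstrass_comparison {u v : k⟦X⟧⟦X⟧} {B : k⟦X⟧[X]} (hu : IsUnit u)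
    (hd : d ≠ 0) (hA : A.IsMonicOfDegree d) (hB : B.IsMonicOfDegree d)
    (hBd : Mem2 d (B : k⟦X⟧⟦X⟧)) (hdN : d ≤ N)
    (h : Mem2 N (u * A - v * B : k⟦X⟧⟦X⟧)) :
    Mem2 (N - d) (u - v) ∧ Mem2 N (↑(A - B) : k⟦X⟧⟦X⟧) := by
  obtain ⟨u', hu'⟩ := hu.exists_left_inv
  have hdiv : Mem2 N ((1 - u' * v) * B + ↑(A - B) : k⟦X⟧⟦X⟧) := by
    convert h.mul_left u' using 1
    push_cast
    linear_combination (-A : k⟦X⟧⟦X⟧) * hu'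
  have hquot := quotient_of_mul_add hB hBd (hA.natDegree_sub_lt hd hB) hdiv
  refine ⟨?_, ?_⟩
  · convert hquot.mul_left u using 1
    linear_combination v * hu'
  · have hqB := hquot.mul hBd
    rw [Nat.sub_add_cancel hdN] at hqB
    simpa using hdiv.sub hqB

end Mem2

theorem mem2_two_coe_X_sq_add_C_mul_X_add_C {b c : k⟦X⟧} (hb : X ∣ b) (hc : X ^ 2 ∣ c) :
    Mem2 2 ((Polynomial.X ^ 2 + Polynomial.C b * Polynomial.X + Polynomial.C c : k⟦X⟧[X]) :
      k⟦X⟧⟦X⟧) := by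
  have := ((mem2_C_mul_X_pow hc 0).add (mem2_C_mul_X_pow (m := 1) (by simpa using hb) 1)).add
    (mem2_C_mul_X_pow (one_dvd (1 : k⟦X⟧)) 2)
  convert this using 1
  push_cast [map_one]
  ring

end

theorem x_sq_sub_y_cube_comparison_general
    {k : Type*} [Field k]
    (u v : PowerSeries (PowerSeries k)) (hu : IsUnit u) (hv : IsUnit v)
    (x0 x1 x2 y0 y1 : PowerSeries k)
    (hy0 : (PowerSeries.X : PowerSeries k) ∣ y0)
    (hy1 : (PowerSeries.X : PowerSeries k) ∣ y1)
    (x y : PowerSeries (PowerSeries k))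
    (hx : x = u * (PowerSeries.C x0 + PowerSeries.C x1 * PowerSeries.X
        + PowerSeries.C x2 * PowerSeries.X ^ 2 + PowerSeries.X ^ 3))
    (hy : y = v * (PowerSeries.C y0 + PowerSeries.C y1 * PowerSeries.X
        + PowerSeries.X ^ 2))
    (i : ℕ) (hi : 6 < i) (h : Mem2 i (x ^ 2 - y ^ 3)) :
    Mem2 (i - 6) (u ^ 2 - v ^ 3) ∧
      (PowerSeries.X : PowerSeries k) ^ (i - 6) ∣ (2 * x2 - 3 * y1) := by
  set p : k⟦X⟧[X] := .X ^ 3 + .C x2 * .X ^ 2 + .C x1 * .X + .C x0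
  set q : k⟦X⟧[X] := .X ^ 2 + .C y1 * .X + .C y0
  have hxy : x ^ 2 - y ^ 3 = u ^ 2 * ↑(p ^ 2) - v ^ 3 * ↑(q ^ 3) := by
    rw [hx, hy]
    push_cast [p, q]
    ring
  rw [hxy] at h
  have hy0' : X ^ 2 ∣ y0 := by
    refine X_sq_dvd_of_X_pow_seven_dvd_sq_sub_cube (a := x0) ((hu.map constantCoeff).pow 2)
      ((hv.map constantCoeff).pow 3) hy0 ?_
    have h0 := (pow_dvd_pow X hi).trans (mem2_iff_X_pow_dvd_coeff.mp h 0)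
    simpa [p, q, coeff_zero_eq_constantCoeff] using h0
  have hq : Mem2 (2 * 3) (↑(q ^ 3) : k⟦X⟧⟦X⟧) := by
    rw [Polynomial.coe_pow]
    exact (mem2_two_coe_X_sq_add_C_mul_X_add_C hy1 hy0').pow 3
  obtain ⟨hunit, hcoeff⟩ := Mem2.weierstrass_comparison (hu.pow 2) (by norm_num)
    ((Polynomial.isMonicOfDegree_add_add_add_three x2 x1 x0).pow 2)
    ((Polynomial.isMonicOfDegree_add_add_two y1 y0).pow 3) hq hi.le h
  refine ⟨hunit, (pow_dvd_pow X (by omega : i - 6 ≤ i - 5)).trans ?_⟩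
  have h5 := mem2_iff_X_pow_dvd_coeff.mp hcoeff 5
  rwa [Polynomial.coeff_coe, Polynomial.coeff_five_sq_sub_cube] at h5

theorem x_sq_sub_y_cube_comparison
    {k : Type*} [Field k]
    (u v : PowerSeries (PowerSeries k)) (hu : IsUnit u) (hv : IsUnit v)
    (x0 x1 x2 y0 y1 : PowerSeries k)
    (hx0 : (PowerSeries.X : PowerSeries k) ∣ x0)
    (hx1 : (PowerSeries.X : PowerSeries k) ∣ x1)
    (hx2 : (PowerSeries.X : PowerSeries k) ∣ x2)
    (hy0 : (PowerSeries.X : PowerSeries k) ∣ y0)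
    (hy1 : (PowerSeries.X : PowerSeries k) ∣ y1)
    (x y : PowerSeries (PowerSeries k))
    (hx : x = u * (PowerSeries.C x0 + PowerSeries.C x1 * PowerSeries.X
        + PowerSeries.C x2 * PowerSeries.X ^ 2 + PowerSeries.X ^ 3))
    (hy : y = v * (PowerSeries.C y0 + PowerSeries.C y1 * PowerSeries.X
        + PowerSeries.X ^ 2))
    (i : ℕ) (hi : 6 < i) (h : Mem2 i (x ^ 2 - y ^ 3)) :
    Mem2 (i - 6) (u ^ 2 - v ^ 3) ∧
      (PowerSeries.X : PowerSeries k) ^ (i - 6) ∣ (2 * x2 - 3 * y1) :=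
  x_sq_sub_y_cube_comparison_general u v hu hv x0 x1 x2 y0 y1 hy0 hy1 x y hx hy i hi h
end
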